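/- arXiv:1709.05942 — 3 statements merged into one kernel-verified Lean document; each statement's English description precedes it below -/
import Mathlib

section
/- Let λ = nϖ_i for a positive integer n, and let q ∈ V be any vector. If w ∈ W^P and α_j is a simple root such that s_j w ∈ W^P, then ⟨wλ − q, ϖ̌_i⟩ ≠ ⟨s_j wλ − q, ϖ̌_i⟩ if and only if j = i. -/
/-- A finite crystallographic root system `Φ` spanning a finite-dimensional real vector space
`V`, together with a fixed base of simple roots `α k`, `k : ι`.  The coroot of a root `β` is
recorded as a linear form `coroot β` on `V` (its values off `Φ` are junk). -/
structure RootSystemBase (ι V : Type) [Fintype ι] [DecidableEq ι]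
    [AddCommGroup V] [Module ℝ V] [FiniteDimensional ℝ V] where
  /-- the set of roots -/
  Φ : Set V
  finite : Φ.Finite
  spanning : Submodule.span ℝ Φ = ⊤
  /-- the simple roots -/
  α : ι → V
  /-- the coroot `β̌` of each root `β`, viewed as a linear form `⟨·, β̌⟩` on `V` -/
  coroot : V → Module.Dual ℝ V
  simple_mem : ∀ k, α k ∈ Φ
  simple_indep : LinearIndependent ℝ α
  coroot_self : ∀ β ∈ Φ, coroot β β = 2
  reflect_mem : ∀ β ∈ Φ, ∀ γ ∈ Φ, γ - coroot β γ • β ∈ Φ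
  crystallographic : ∀ β ∈ Φ, ∀ γ ∈ Φ, ∃ z : ℤ, coroot β γ = (z : ℝ)
  /-- every root is a non-negative or non-positive integral combination of the simple roots -/
  simple_base : ∀ β ∈ Φ,
    (∃ c : ι → ℕ, β = ∑ k, (c k : ℝ) • α k) ∨ (∃ c : ι → ℕ, β = -(∑ k, (c k : ℝ) • α k))

namespace RootSystemBase

variable {ι V : Type} [Fintype ι] [DecidableEq ι]
  [AddCommGroup V] [Module ℝ V] [FiniteDimensional ℝ V]
  (D : RootSystemBase ι V)

/-- the simple reflection `s k` associated with the simple root `α k` -/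
noncomputable def s (k : ι) : V ≃ₗ[ℝ] V :=
  Module.reflection (D.coroot_self (D.α k) (D.simple_mem k))

/-- the product `s k₁ * ⋯ * s kₘ` of the word `l = [k₁, …, kₘ]` in the simple reflections -/
noncomputable def wordProd (l : List ι) : V ≃ₗ[ℝ] V := (l.map D.s).prod

/-- membership in the Weyl group `W`, the group generated by the simple reflections -/
def IsWeyl (w : V ≃ₗ[ℝ] V) : Prop := ∃ l : List ι, D.wordProd l = w

/-- the length `ℓ(w)` of an element of the Weyl group -/
noncomputable def len (w : V ≃ₗ[ℝ] V) : ℕ :=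
  sInf {n | ∃ l : List ι, D.wordProd l = w ∧ l.length = n}

/-- a word in the simple reflections is reduced if its length is the length of its product -/
def IsRed (l : List ι) : Prop := D.len (D.wordProd l) = l.length

/-- the Bruhat order: `u ≤ w` iff some reduced word for `w` contains a subword which is a
reduced word for `u` -/
def BruhatLE (u w : V ≃ₗ[ℝ] V) : Prop :=
  ∃ l : List ι, D.IsRed l ∧ D.wordProd l = w ∧
    ∃ l' : List ι, l'.Sublist l ∧ D.IsRed l' ∧ D.wordProd l' = u

/-- the maximal standard parabolic subgroup `W_P` generated by the `s j` with `j ≠ i` -/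
def WP (i : ι) : Subgroup (V ≃ₗ[ℝ] V) :=
  Subgroup.closure {g | ∃ k, k ≠ i ∧ g = D.s k}

/-- the set `W^P` of minimal-length representatives of the left cosets `w W_P` -/
def WPmin (i : ι) : Set (V ≃ₗ[ℝ] V) :=
  {w | D.IsWeyl w ∧ ∀ u ∈ D.WP i, D.len w ≤ D.len (w * u)}

/-- `W^P(k)`: the set of elements of `W^P` admitting a reduced expression in which the
generator `s i` occurs at most `k` times (empty for `k < 0`) -/
def WPle (i : ι) (k : ℤ) : Set (V ≃ₗ[ℝ] V) :=
  {w | w ∈ D.WPmin i ∧ ∃ l : List ι, D.IsRed l ∧ D.wordProd l = w ∧ (l.count i : ℤ) ≤ k}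

end RootSystemBase

/-! Since `s_j` moves a vector by a multiple of `α_j`, and `ϖ̌_i` kills `α_j` for `j ≠ i`, only
`j = i` can change the pairing, and it does so iff `⟨wϖ_i, α̌_i⟩ ≠ 0`. If that pairing vanished,
the root `β = w⁻¹α_i` would be orthogonal to `ϖ_i` for a `W`-invariant inner product, so its
`α_i`-coefficient would be zero, and then the reflection `s_β = w⁻¹ s_i w` lies in `W_P`.
Thus `w` and `s_i w` would be minimal representatives of the same coset, hence of equal length,
which contradicts `det (s_i w) = -det w` with `det = (-1)^ℓ` on `W`. -/

open Module Set

lemma Module.det_reflection {K M : Type*} [Field K] [AddCommGroup M] [Module K M]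
    [FiniteDimensional K M] {x : M} {f : Dual K M} (h : f x = 2) :
    LinearMap.det (reflection h : M →ₗ[K] M) = -1 := by
  let b := Module.finBasis K M
  have hmat : LinearMap.toMatrix b b (reflection h) =
      1 + Matrix.replicateCol (Fin 1) (b.repr x) *
        Matrix.replicateRow (Fin 1) (fun j => -f (b j)) := by
    ext p q
    simp [LinearMap.toMatrix_apply, reflection_apply, Matrix.one_apply, Matrix.mul_apply,
      sub_eq_add_neg, Finsupp.single_apply, eq_comm, mul_comm]
  have hfx : ∑ j, f (b j) * b.repr x j = 2 := by
    have hsum := congrArg f (b.sum_repr x)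
    simp only [map_sum, map_smul, smul_eq_mul, h] at hsum
    simpa only [mul_comm] using hsum
  rw [← LinearMap.det_toMatrix b, hmat]
  refine (Matrix.det_one_add_replicateCol_mul_replicateRow _ _).trans ?_
  simp only [dotProduct, neg_mul, Finset.sum_neg_distrib, hfx]
  norm_num

lemma Subgroup.finite_of_mapsTo {R M : Type*} [Semiring R] [AddCommMonoid M] [Module R M]
    {G : Subgroup (M ≃ₗ[R] M)} {Φ : Set M} (hΦ : Φ.Finite) (hspan : Submodule.span R Φ = ⊤)
    (hG : ∀ g ∈ G, MapsTo g Φ Φ) : Finite G := by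
  have : Finite Φ := hΦ.to_subtype
  refine Finite.of_injective (fun g : G => (hG g g.2).restrict) fun g g' hgg' => ?_
  refine Subtype.ext (LinearEquiv.toLinearMap_injective (LinearMap.ext_on hspan fun x hx => ?_))
  exact congrArg Subtype.val (congrFun hgg' ⟨x, hx⟩)

lemma exists_invariant_bilinForm_pos {V : Type*} [AddCommGroup V] [Module ℝ V]
    [FiniteDimensional ℝ V] (G : Subgroup (V ≃ₗ[ℝ] V)) [Finite G] :
    ∃ B : LinearMap.BilinForm ℝ V, (∀ v, v ≠ 0 → 0 < B v v) ∧
      ∀ g ∈ G, ∀ v u, B (g v) (g u) = B v u := by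
  have := Fintype.ofFinite G
  let e := LinearEquiv.ofFinrankEq V (EuclideanSpace ℝ (Fin (finrank ℝ V)))
    finrank_euclideanSpace_fin.symm
  let B₀ : LinearMap.BilinForm ℝ V := (innerₗ _).compl₁₂ e.toLinearMap e.toLinearMap
  have hB₀ : ∀ v, v ≠ 0 → 0 < B₀ v v := fun v hv =>
    real_inner_self_pos.mpr (e.map_ne_zero_iff.mpr hv)
  refine ⟨∑ g : G, B₀.compl₁₂ (g : V →ₗ[ℝ] V) (g : V →ₗ[ℝ] V), fun v hv => ?_,
    fun h hh v u => ?_⟩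
  · simp only [LinearMap.sum_apply, LinearMap.compl₁₂_apply]
    exact Finset.sum_pos' (fun g _ => (hB₀ _ (g.1.map_ne_zero_iff.mpr hv)).le)
      ⟨1, Finset.mem_univ _, hB₀ _ hv⟩
  · simp only [LinearMap.sum_apply, LinearMap.compl₁₂_apply]
    exact Fintype.sum_equiv (Equiv.mulRight ⟨h, hh⟩) _ _ fun g => by
      simp only [Equiv.coe_mulRight, Subgroup.coe_mul, LinearEquiv.coe_toLinearMap_mul,
        Module.End.mul_apply, LinearEquiv.coe_coe]

namespace RootSystemBase

variable {ι V : Type} [Fintype ι] [DecidableEq ι]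
  [AddCommGroup V] [Module ℝ V] [FiniteDimensional ℝ V]
  (D : RootSystemBase ι V)

lemma s_apply (k : ι) (v : V) : D.s k v = v - D.coroot (D.α k) v • D.α k :=
  reflection_apply _ _

lemma s_apply_self (k : ι) : D.s k (D.α k) = -D.α k :=
  reflection_apply_self _

lemma s_inv (k : ι) : (D.s k)⁻¹ = D.s k :=
  reflection_inv _

lemma ne_zero_of_mem {β : V} (hβ : β ∈ D.Φ) : β ≠ 0 := by
  rintro rfl
  simpa using D.coroot_self 0 hβ

lemma s_mem_WP {i k : ι} (hk : k ≠ i) : D.s k ∈ D.WP i :=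
  Subgroup.subset_closure ⟨k, hk, rfl⟩

lemma wordProd_cons (k : ι) (l : List ι) : D.wordProd (k :: l) = D.s k * D.wordProd l := by
  simp [wordProd]

lemma isWeyl_s_mul {w : V ≃ₗ[ℝ] V} (hw : D.IsWeyl w) (k : ι) : D.IsWeyl (D.s k * w) := by
  obtain ⟨l, rfl⟩ := hw
  exact ⟨k :: l, D.wordProd_cons k l⟩

def weylGroup : Subgroup (V ≃ₗ[ℝ] V) := Subgroup.closure (range D.s)

lemma s_mem_weylGroup (k : ι) : D.s k ∈ D.weylGroup :=
  Subgroup.subset_closure ⟨k, rfl⟩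

lemma mem_weylGroup_of_isWeyl {w : V ≃ₗ[ℝ] V} (hw : D.IsWeyl w) : w ∈ D.weylGroup := by
  obtain ⟨l, rfl⟩ := hw
  induction l with
  | nil => exact one_mem _
  | cons k l ih => rw [wordProd_cons]; exact mul_mem (D.s_mem_weylGroup k) ih

lemma mapsTo_s (k : ι) : MapsTo (D.s k) D.Φ D.Φ := fun γ hγ => by
  rw [s_apply]
  exact D.reflect_mem _ (D.simple_mem k) γ hγ

lemma mapsTo_of_mem_weylGroup {w : V ≃ₗ[ℝ] V} (hw : w ∈ D.weylGroup) : MapsTo w D.Φ D.Φ := by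
  induction hw using Subgroup.closure_induction'' with
  | mem _ h => obtain ⟨k, rfl⟩ := h; exact D.mapsTo_s k
  | inv_mem _ h => obtain ⟨k, rfl⟩ := h; rw [s_inv]; exact D.mapsTo_s k
  | one => exact mapsTo_id _
  | mul _ _ _ _ hx hy => exact hx.comp hy

instance finite_weylGroup : Finite D.weylGroup :=
  Subgroup.finite_of_mapsTo D.finite D.spanning fun _ => D.mapsTo_of_mem_weylGroup

lemma coroot_eq_of_mapsTo {β : V} (hβ : β ∈ D.Φ) {f : Dual ℝ V} (hf : f β = 2)
    (hmaps : MapsTo (preReflection β f) D.Φ D.Φ) : f = D.coroot β :=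
  Dual.eq_of_preReflection_mapsTo D.finite D.spanning hf hmaps (D.coroot_self β hβ)
    fun γ hγ => D.reflect_mem β hβ γ hγ

lemma reflection_smul {β : V} (hβ : β ∈ D.Φ) {t : ℝ} (ht : t ≠ 0) (htβ : t • β ∈ D.Φ) :
    reflection (D.coroot_self (t • β) htβ) = reflection (D.coroot_self β hβ) := by
  have hcoroot : t⁻¹ • D.coroot β = D.coroot (t • β) := by
    refine D.coroot_eq_of_mapsTo htβ ?_ fun γ hγ => ?_
    · simp [D.coroot_self β hβ, ht]
    · have : preReflection (t • β) (t⁻¹ • D.coroot β) γ = γ - D.coroot β γ • β := by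
        simp [preReflection_apply, smul_smul, mul_right_comm _ _ t, ht]
      rw [this]
      exact D.reflect_mem β hβ γ hγ
  ext v
  simp [reflection_apply, ← hcoroot, smul_smul, mul_right_comm _ _ t, ht]

lemma reflection_conj {u : V ≃ₗ[ℝ] V} (hu : u ∈ D.weylGroup) {β γ : V} (hβ : β ∈ D.Φ)
    (hγ : γ ∈ D.Φ) (huβ : u β = γ) :
    reflection (D.coroot_self γ hγ) = u * reflection (D.coroot_self β hβ) * u⁻¹ := by
  subst huβ
  have hcoroot : D.coroot β ∘ₗ (u⁻¹ : V ≃ₗ[ℝ] V).toLinearMap = D.coroot (u β) := by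
    refine D.coroot_eq_of_mapsTo hγ ?_ fun x hx => ?_
    · simp [D.coroot_self β hβ]
    · have : preReflection (u β) (D.coroot β ∘ₗ (u⁻¹ : V ≃ₗ[ℝ] V).toLinearMap) x =
          u (reflection (D.coroot_self β hβ) (u⁻¹ x)) := by
        simp [preReflection_apply, reflection_apply]
      rw [this]
      exact D.mapsTo_of_mem_weylGroup hu
        (D.reflect_mem β hβ _ (D.mapsTo_of_mem_weylGroup (inv_mem hu) hx))
  ext v
  simp only [reflection_apply, LinearEquiv.mul_apply]
  rw [← hcoroot]
  simp

section InvariantForm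

variable {B : LinearMap.BilinForm ℝ V}

lemma two_mul_apply_simple {k : ι} (hB : ∀ v u, B (D.s k v) (D.s k u) = B v u) (v : V) :
    2 * B (D.α k) v = D.coroot (D.α k) v * B (D.α k) (D.α k) := by
  have h := hB (D.α k) v
  rw [s_apply_self, s_apply] at h
  simp only [map_neg, map_sub, map_smul, LinearMap.neg_apply, smul_eq_mul] at h
  linarith

lemma exists_coroot_simple_pos (hBpos : ∀ v, v ≠ 0 → 0 < B v v)
    (hB : ∀ k v u, B (D.s k v) (D.s k u) = B v u) {β : V} (hβ : β ≠ 0) {c : ι → ℕ}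
    (hc : β = ∑ k, (c k : ℝ) • D.α k) : ∃ k, 0 < c k ∧ 0 < D.coroot (D.α k) β := by
  by_contra! hneg
  have hterm : ∀ k, (c k : ℝ) * B (D.α k) β ≤ 0 := fun k => by
    rcases (c k).eq_zero_or_pos with hck | hck
    · simp [hck]
    · have h2 := D.two_mul_apply_simple (hB k) β
      have hαα := hBpos _ (D.ne_zero_of_mem (D.simple_mem k))
      have hk := hneg k hck
      have hBk : B (D.α k) β ≤ 0 := by nlinarith
      exact mul_nonpos_of_nonneg_of_nonpos (Nat.cast_nonneg _) hBk
  have hsum : B β β = ∑ k, (c k : ℝ) * B (D.α k) β := by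
    conv_lhs => enter [1]; rw [hc]
    simp [map_sum]
  have hββ := hBpos β hβ
  linarith [Finset.sum_nonpos fun k (_ : k ∈ Finset.univ) => hterm k]

lemma coeff_sub_simple_of_eq {c : ι → ℕ} {k : ι} {m : ℝ} {β : V}
    (hc : β = ∑ j, (c j : ℝ) • D.α j) {f : ι → ℝ} (hf : β - m • D.α k = ∑ j, f j • D.α j) (j : ι) :
    f j = c j - if j = k then m else 0 := by
  refine Fintype.linearIndependent_iffₛ.mp D.simple_indep f
    (fun j => c j - if j = k then m else 0) ?_ j
  simp [← hf, hc, sub_smul, Finset.sum_sub_distrib, ite_smul]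

lemma eq_smul_simple_of_sub_eq_neg {c d : ι → ℕ} {k : ι} {m : ℝ} {β : V}
    (hc : β = ∑ j, (c j : ℝ) • D.α j) (hd : β - m • D.α k = -∑ j, (d j : ℝ) • D.α j) :
    β = (c k : ℝ) • D.α k := by
  have hcd : ∀ j, j ≠ k → c j = 0 := fun j hjk => by
    have h := D.coeff_sub_simple_of_eq hc (f := fun j => -(d j : ℝ))
      (by rw [hd]; simp only [neg_smul, Finset.sum_neg_distrib]) j
    rw [if_neg hjk, sub_zero] at h
    have : (c j : ℝ) = 0 := by linarith [(Nat.cast_nonneg (d j) : (0 : ℝ) ≤ d j)]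
    exact_mod_cast this
  rw [hc, Finset.sum_eq_single k (fun j _ hjk => by simp [hcd j hjk]) (by simp)]

lemma reflection_mem_WP_of_coeff_eq_zero (hBpos : ∀ v, v ≠ 0 → 0 < B v v)
    (hB : ∀ k v u, B (D.s k v) (D.s k u) = B v u) {i : ι} (c : ι → ℕ) {β : V}
    (hβ : β ∈ D.Φ) (hc : β = ∑ k, (c k : ℝ) • D.α k) (hci : c i = 0) :
    reflection (D.coroot_self β hβ) ∈ D.WP i := by
  induction hN : ∑ k, c k using Nat.strong_induction_on generalizing c β with
  | _ N ih =>
  -- Either `s_k β` is a positive root of smaller height and `s_β = s_k s_{s_k β} s_k`,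
  -- or `s_k β` is negative, which forces `β ∈ ℝ α_k`.
  obtain ⟨k, hck, hm⟩ := D.exists_coroot_simple_pos hBpos hB (D.ne_zero_of_mem hβ) hc
  have hki : k ≠ i := by rintro rfl; omega
  set m := D.coroot (D.α k) β
  have hγ : β - m • D.α k ∈ D.Φ := D.reflect_mem _ (D.simple_mem k) β hβ
  rcases D.simple_base _ hγ with ⟨d, hd⟩ | ⟨d, hd⟩
  · have hdc := D.coeff_sub_simple_of_eq hc hd
    have hdi : d i = 0 := by
      have h := hdc i
      rw [if_neg hki.symm, hci, Nat.cast_zero, sub_zero] at h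
      exact_mod_cast h
    have hlt : ∑ j, d j < N := by
      rw [← hN]
      refine Finset.sum_lt_sum (fun j _ => ?_) ⟨k, Finset.mem_univ k, ?_⟩
      · have h := hdc j
        split_ifs at h <;> exact_mod_cast (by linarith : (d j : ℝ) ≤ c j)
      · have h := hdc k
        rw [if_pos rfl] at h
        exact_mod_cast (by linarith : (d k : ℝ) < c k)
    have hsγ : D.s k (β - m • D.α k) = β := by
      simp only [s_apply, map_sub, map_smul, D.coroot_self _ (D.simple_mem k), m]
      module
    rw [D.reflection_conj (D.s_mem_weylGroup k) hγ hβ hsγ]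
    exact mul_mem (mul_mem (D.s_mem_WP hki) (ih _ hlt d hγ hd hdi rfl))
      (inv_mem (D.s_mem_WP hki))
  · have hβk := D.eq_smul_simple_of_sub_eq_neg hc hd
    have hck' : (c k : ℝ) ≠ 0 := by exact_mod_cast hck.ne'
    have : reflection (D.coroot_self β hβ) = D.s k := by
      subst hβk
      exact D.reflection_smul (D.simple_mem k) hck' hβ
    rw [this]
    exact D.s_mem_WP hki

lemma coeff_eq_zero_of_bilin_eq_zero (hBpos : ∀ v, v ≠ 0 → 0 < B v v)
    (hB : ∀ k v u, B (D.s k v) (D.s k u) = B v u) {i : ι} {ϖ : V}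
    (hϖ : ∀ k, D.coroot (D.α k) ϖ = if k = i then 1 else 0) (c : ι → ℝ)
    (h : B (∑ k, c k • D.α k) ϖ = 0) : c i = 0 := by
  have hsimple : ∀ k, B (D.α k) ϖ = if k = i then B (D.α i) (D.α i) / 2 else 0 := fun k => by
    have h2 := D.two_mul_apply_simple (hB k) ϖ
    rw [hϖ k] at h2
    split_ifs at h2 ⊢ with hk
    · subst hk; linarith
    · linarith
  simp only [map_sum, map_smul, LinearMap.sum_apply, LinearMap.smul_apply, smul_eq_mul,
    hsimple, mul_ite, mul_zero, Finset.sum_ite_eq', Finset.mem_univ, if_true] at h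
  have hαα := hBpos _ (D.ne_zero_of_mem (D.simple_mem i))
  rcases mul_eq_zero.mp h with h | h
  · exact h
  · linarith

lemma reflection_mem_WP_of_bilin_eq_zero (hBpos : ∀ v, v ≠ 0 → 0 < B v v)
    (hB : ∀ k v u, B (D.s k v) (D.s k u) = B v u) {i : ι} {ϖ : V}
    (hϖ : ∀ k, D.coroot (D.α k) ϖ = if k = i then 1 else 0) {β : V} (hβ : β ∈ D.Φ)
    (hβϖ : B β ϖ = 0) : reflection (D.coroot_self β hβ) ∈ D.WP i := by
  rcases D.simple_base β hβ with ⟨c, hc⟩ | ⟨c, hc⟩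
  · refine D.reflection_mem_WP_of_coeff_eq_zero hBpos hB c hβ hc ?_
    exact_mod_cast D.coeff_eq_zero_of_bilin_eq_zero hBpos hB hϖ _ (hc ▸ hβϖ)
  · have hnegβ : (-1 : ℝ) • β ∈ D.Φ := by
      have h := D.reflect_mem β hβ β hβ
      rwa [D.coroot_self β hβ, two_smul, sub_add_cancel_left, ← neg_one_smul ℝ] at h
    have hc' : (-1 : ℝ) • β = ∑ k, (c k : ℝ) • D.α k := by simp [hc]
    rw [← D.reflection_smul hβ (by norm_num) hnegβ]
    refine D.reflection_mem_WP_of_coeff_eq_zero hBpos hB c hnegβ hc' ?_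
    have hc'ϖ : B (∑ k, (c k : ℝ) • D.α k) ϖ = 0 := by
      rw [← hc', map_smul, LinearMap.smul_apply, hβϖ, smul_zero]
    exact_mod_cast D.coeff_eq_zero_of_bilin_eq_zero hBpos hB hϖ _ hc'ϖ

end InvariantForm

lemma len_eq_of_mem_WPmin {i : ι} {w u : V ≃ₗ[ℝ] V} (hw : w ∈ D.WPmin i)
    (hwu : w * u ∈ D.WPmin i) (hu : u ∈ D.WP i) : D.len w = D.len (w * u) :=
  le_antisymm (hw.2 u hu) (by simpa using hwu.2 u⁻¹ (inv_mem hu))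

lemma det_wordProd (l : List ι) :
    LinearMap.det (D.wordProd l : V →ₗ[ℝ] V) = (-1) ^ l.length := by
  induction l with
  | nil => simp [wordProd]
  | cons k l ih =>
    rw [wordProd_cons, LinearEquiv.coe_toLinearMap_mul, map_mul, ih, s, det_reflection,
      List.length_cons, pow_succ']

lemma det_eq_neg_one_pow_len {w : V ≃ₗ[ℝ] V} (hw : D.IsWeyl w) :
    LinearMap.det (w : V →ₗ[ℝ] V) = (-1) ^ D.len w := by
  obtain ⟨l, hl⟩ := hw
  obtain ⟨l', hl', hlen⟩ : D.len w ∈ {n | ∃ l : List ι, D.wordProd l = w ∧ l.length = n} :=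
    Nat.sInf_mem ⟨_, l, hl, rfl⟩
  rw [← hlen, ← hl', det_wordProd]

lemma len_s_mul_ne {w : V ≃ₗ[ℝ] V} (hw : D.IsWeyl w) (k : ι) : D.len (D.s k * w) ≠ D.len w := by
  intro h
  have hdet : LinearMap.det ((D.s k * w : V ≃ₗ[ℝ] V) : V →ₗ[ℝ] V) =
      LinearMap.det (D.s k : V →ₗ[ℝ] V) * LinearMap.det (w : V →ₗ[ℝ] V) := by
    rw [LinearEquiv.coe_toLinearMap_mul, map_mul]
  rw [D.det_eq_neg_one_pow_len (D.isWeyl_s_mul hw k), D.det_eq_neg_one_pow_len hw, h, s,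
    det_reflection] at hdet
  have hpow : ((-1 : ℝ)) ^ D.len w ≠ 0 := pow_ne_zero _ (by norm_num)
  exact hpow (by linarith)

lemma coroot_simple_apply_ne_zero {i : ι} {ϖ : V}
    (hϖ : ∀ k, D.coroot (D.α k) ϖ = if k = i then 1 else 0) {w : V ≃ₗ[ℝ] V}
    (hw : w ∈ D.WPmin i) (hiw : D.s i * w ∈ D.WPmin i) : D.coroot (D.α i) (w ϖ) ≠ 0 := by
  intro h0
  obtain ⟨B, hBpos, hB⟩ := exists_invariant_bilinForm_pos D.weylGroup
  have hBs : ∀ k v u, B (D.s k v) (D.s k u) = B v u := fun k => hB _ (D.s_mem_weylGroup k)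
  have hwW := D.mem_weylGroup_of_isWeyl hw.1
  have hβ : w⁻¹ (D.α i) ∈ D.Φ := D.mapsTo_of_mem_weylGroup (inv_mem hwW) (D.simple_mem i)
  have hwβ : w (w⁻¹ (D.α i)) = D.α i := by simp
  have hβϖ : B (w⁻¹ (D.α i)) ϖ = 0 := by
    have h2 := D.two_mul_apply_simple (hBs i) (w ϖ)
    rw [h0, zero_mul, ← hwβ, hB w hwW] at h2
    linarith
  have hu : w⁻¹ * D.s i * w ∈ D.WP i := by
    have hconj := D.reflection_conj hwW hβ (D.simple_mem i) hwβ
    rw [show w⁻¹ * D.s i * w = reflection (D.coroot_self _ hβ) by rw [s, hconj]; group]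
    exact D.reflection_mem_WP_of_bilin_eq_zero hBpos hBs hϖ hβ hβϖ
  have hwu : w * (w⁻¹ * D.s i * w) = D.s i * w := by group
  have hlen := D.len_eq_of_mem_WPmin hw (hwu ▸ hiw) hu
  rw [hwu] at hlen
  exact D.len_s_mul_ne hw.1 i hlen.symm

end RootSystemBase

open RootSystemBase in
/-- Let `λ = n ϖ_i` with `n` a positive integer and let `q ∈ V`.  If `w ∈ W^P` and `α j` is a
simple root with `s j * w ∈ W^P`, then `⟨wλ − q, ϖ̌_i⟩ ≠ ⟨s_j wλ − q, ϖ̌_i⟩ ↔ j = i`. -/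
theorem statement1 {ι V : Type} [Fintype ι] [DecidableEq ι]
    [AddCommGroup V] [Module ℝ V] [FiniteDimensional ℝ V]
    (D : RootSystemBase ι V) (i : ι)
    -- the fundamental weight `ϖ_i`, characterized by `⟨ϖ_i, α̌_k⟩ = δ_{ik}`
    (ϖ : V) (hϖ : ∀ k, D.coroot (D.α k) ϖ = if k = i then 1 else 0)
    -- the fundamental coweight `ϖ̌_i`, characterized by `⟨α_k, ϖ̌_i⟩ = δ_{ik}`
    (ϖc : Module.Dual ℝ V) (hϖc : ∀ k, ϖc (D.α k) = if k = i then 1 else 0)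
    (n : ℕ) (hn : 0 < n) (q : V)
    (w : V ≃ₗ[ℝ] V) (hw : w ∈ D.WPmin i)
    (j : ι) (hjw : D.s j * w ∈ D.WPmin i) :
    ϖc (w ((n : ℝ) • ϖ) - q) ≠ ϖc ((D.s j * w) ((n : ℝ) • ϖ) - q) ↔ j = i := by
  have hpairing : ϖc ((D.s j * w) ((n : ℝ) • ϖ) - q) =
      ϖc (w ((n : ℝ) • ϖ) - q) - n * D.coroot (D.α j) (w ϖ) * ϖc (D.α j) := by
    simp only [LinearEquiv.mul_apply, s_apply, map_smul, map_sub, smul_eq_mul]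
    ring
  rw [hpairing, hϖc j]
  by_cases hji : j = i
  · subst hji
    have hn' : (n : ℝ) ≠ 0 := by exact_mod_cast hn.ne'
    have hshift := mul_ne_zero hn' (D.coroot_simple_apply_ne_zero hϖ hw hjw)
    simp only [if_true, mul_one, iff_true]
    intro h
    exact hshift (by linarith)
  · simp [hji]
end

section
/- Let S be a finite nonempty subset of ℚ^n and let ν ∈ ℚ^n. Then ν lies in the convex hull of S in ℝ^n if and only if for every ξ ∈ ℤ^n there exists χ ∈ S with ⟨χ − ν, ξ⟩ ≤ 0, where ⟨·,·⟩ denotes the standard inner product on ℝ^n. (This is the lattice form of the Hilbert–Mumford criterion for semistability under a torus action: a point with weight support S is semistable for the linearization shifted by the character ν iff ν lies in the weight polytope conv(S).) -/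
/-!
A linear functional attains its minimum over a convex hull at a point of the generating set, which
gives the forward direction. Conversely, if `ν` lies outside the (closed) convex hull of the finite
set `S`, Hahn–Banach separation yields a real `ξ` with `⟨χ - ν, ξ⟩ > 0` for all `χ ∈ S`. The set of
such `ξ` is an open cone, so it contains a ball of radius `r` and, after scaling by `1 / r`, a ball
of radius `1`, which in the sup norm always contains an integral point.
-/

open Matrix

section

variable {ι : Type*} [Fintype ι]

theorem exists_dotProduct_le_of_mem_convexHull {s : Set (ι → ℝ)} {x : ι → ℝ}
    (hx : x ∈ convexHull ℝ s) (ξ : ι → ℝ) : ∃ y ∈ s, y ⬝ᵥ ξ ≤ x ⬝ᵥ ξ :=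
  (((dotProductBilin ℝ ℝ).flip ξ).concaveOn convex_univ).exists_le_of_mem_convexHull
    (Set.subset_univ s) hx

theorem exists_dotProduct_lt_of_notMem_convexHull {s : Set (ι → ℝ)} (hs : s.Finite)
    {x : ι → ℝ} (hx : x ∉ convexHull ℝ s) : ∃ ξ : ι → ℝ, ∀ y ∈ s, x ⬝ᵥ ξ < y ⬝ᵥ ξ := by
  classical
  obtain ⟨f, u, hfx, hfu⟩ :=
    geometric_hahn_banach_point_closed (convex_convexHull ℝ s)
      (hs.isClosed_convexHull (𝕜 := ℝ)) hx
  have hf : ∀ z, f z = z ⬝ᵥ (dotProductEquiv ℝ ι).symm f.toLinearMap := fun z => by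
    rw [dotProduct_comm]
    exact (LinearMap.congr_fun ((dotProductEquiv ℝ ι).apply_symm_apply f.toLinearMap) z).symm
  refine ⟨(dotProductEquiv ℝ ι).symm f.toLinearMap, fun y hy => ?_⟩
  rw [← hf, ← hf]
  exact hfx.trans (hfu y (subset_convexHull ℝ s hy))

theorem exists_intCast_mem_of_isOpen_of_smul_mem {U : Set (ι → ℝ)} (hU : IsOpen U)
    (hne : U.Nonempty) (hsmul : ∀ t : ℝ, 0 < t → ∀ x ∈ U, t • x ∈ U) :
    ∃ z : ι → ℤ, (fun i => (z i : ℝ)) ∈ U := by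
  obtain ⟨y, hy⟩ := hne
  obtain ⟨r, hr, hball⟩ := Metric.isOpen_iff.mp hU y hy
  set z : ι → ℤ := fun i => round (y i / r)
  refine ⟨z, ?_⟩
  have hrz : r • (fun i => (z i : ℝ)) ∈ U := by
    refine hball ?_
    rw [Metric.mem_ball, dist_pi_lt_iff hr]
    intro i
    calc dist (r * z i) (y i) = r * |y i / r - z i| := by
          rw [Real.dist_eq, abs_sub_comm, ← abs_of_pos hr, ← abs_mul, abs_of_pos hr, mul_sub,
            mul_div_cancel₀ _ hr.ne']
      _ ≤ r * (1 / 2) := by gcongr; exact abs_sub_round _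
      _ < r := by linarith
  simpa [smul_smul, hr.ne'] using hsmul r⁻¹ (inv_pos.mpr hr) _ hrz

theorem exists_intCast_dotProduct_lt_of_notMem_convexHull {s : Set (ι → ℝ)} (hs : s.Finite)
    {x : ι → ℝ} (hx : x ∉ convexHull ℝ s) :
    ∃ ξ : ι → ℤ, ∀ y ∈ s, x ⬝ᵥ (fun i => (ξ i : ℝ)) < y ⬝ᵥ (fun i => (ξ i : ℝ)) := by
  refine exists_intCast_mem_of_isOpen_of_smul_mem (U := {ξ | ∀ y ∈ s, x ⬝ᵥ ξ < y ⬝ᵥ ξ})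
    ?_ (exists_dotProduct_lt_of_notMem_convexHull hs hx) ?_
  · simpa only [Set.ofPred_forall] using
      hs.isOpen_biInter fun y _ => isOpen_lt (by fun_prop) (by fun_prop)
  · intro t ht ξ hξ y hy
    simpa only [dotProduct_smul, smul_eq_mul] using mul_lt_mul_of_pos_left (hξ y hy) ht

end

theorem statement10_general (n : ℕ) (S : Finset (Fin n → ℚ)) (ν : Fin n → ℚ) :
    ((fun j => (ν j : ℝ)) ∈
      convexHull ℝ {x : Fin n → ℝ | ∃ χ ∈ S, x = fun j => (χ j : ℝ)}) ↔
    ∀ ξ : Fin n → ℤ, ∃ χ ∈ S, (∑ j, ((χ j : ℝ) - (ν j : ℝ)) * (ξ j : ℝ)) ≤ 0 := by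
  have hsum (χ : Fin n → ℚ) (ξ : Fin n → ℤ) :
      ∑ j, ((χ j : ℝ) - (ν j : ℝ)) * (ξ j : ℝ) =
        (fun j => (χ j : ℝ)) ⬝ᵥ (fun j => (ξ j : ℝ)) -
          (fun j => (ν j : ℝ)) ⬝ᵥ (fun j => (ξ j : ℝ)) := by
    simp only [dotProduct, sub_mul, Finset.sum_sub_distrib]
  simp only [hsum, sub_nonpos]
  constructor
  · intro hν ξ
    obtain ⟨-, ⟨χ, hχ, rfl⟩, hle⟩ :=
      exists_dotProduct_le_of_mem_convexHull hν fun j => (ξ j : ℝ)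
    exact ⟨χ, hχ, hle⟩
  · intro h
    by_contra hν
    have hfin : {x : Fin n → ℝ | ∃ χ ∈ S, x = fun j => (χ j : ℝ)}.Finite :=
      (S.finite_toSet.image fun χ j => (χ j : ℝ)).subset fun _ ⟨χ, hχ, hx⟩ => ⟨χ, hχ, hx.symm⟩
    obtain ⟨ξ, hξ⟩ := exists_intCast_dotProduct_lt_of_notMem_convexHull hfin hν
    obtain ⟨χ, hχ, hle⟩ := h ξ
    exact hle.not_gt (hξ _ ⟨χ, hχ, rfl⟩)

/-- **Lattice form of the Hilbert–Mumford criterion for semistability under a torus action.**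
Let `S` be a finite nonempty set of rational vectors in `ℚ^n` and `ν ∈ ℚ^n`.  Then `ν` lies
in the convex hull of `S` in `ℝ^n` iff for every integral `ξ ∈ ℤ^n` there is `χ ∈ S` with
`⟨χ − ν, ξ⟩ ≤ 0` for the standard inner product. -/
theorem statement10 (n : ℕ) (S : Finset (Fin n → ℚ)) (hS : S.Nonempty) (ν : Fin n → ℚ) :
    ((fun j => (ν j : ℝ)) ∈
      convexHull ℝ {x : Fin n → ℝ | ∃ χ ∈ S, x = fun j => (χ j : ℝ)}) ↔
    ∀ ξ : Fin n → ℤ, ∃ χ ∈ S, (∑ j, ((χ j : ℝ) - (ν j : ℝ)) * (ξ j : ℝ)) ≤ 0 :=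
  statement10_general n S ν
end

section
/- Let S be a finite nonempty subset of ℚ^n and let ν ∈ ℚ^n. Then ν lies in the interior of the convex hull of S in ℝ^n if and only if for every nonzero ξ ∈ ℤ^n there exists χ ∈ S with ⟨χ − ν, ξ⟩ < 0, where ⟨·,·⟩ denotes the standard inner product on ℝ^n. (This is the lattice form of the Hilbert–Mumford criterion for stability under a torus action: a point with weight support S is stable for the linearization shifted by the character ν iff ν lies in the interior of the weight polytope conv(S).) -/
/-!
Replacing integral directions `ξ` by arbitrary real ones, the criterion is the supporting
hyperplane theorem in `ℝ^n`. The real directions `w ≠ 0` with `⟨χ - ν, w⟩ ≥ 0` for all `χ ∈ S`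
form a cone cut out by finitely many rational inequalities. Near such a `w`, the inequalities that
are strict at `w` stay strict, and the subspace where the others are equalities is defined over `ℚ`,
so its rational points are dense in it; hence the cone contains a nonzero rational point, and
clearing denominators an integral one.
-/

open Set Matrix

section SupportingHyperplane

variable {E : Type*}

theorem exists_lt_of_mem_interior_convexHull [AddCommGroup E] [Module ℝ E] [TopologicalSpace E]
    [IsTopologicalAddGroup E] [ContinuousSMul ℝ E] {T : Set E} {ν : E}
    (hν : ν ∈ interior (convexHull ℝ T)) {f : Module.Dual ℝ E} (hf : f ≠ 0) :
    ∃ x ∈ T, f x < f ν := by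
  obtain ⟨v, hv⟩ : ∃ v, 0 < f v := by
    obtain ⟨v, hv⟩ := DFunLike.ne_iff.mp hf
    rcases (show f v ≠ 0 from hv).lt_or_gt with h | h
    · exact ⟨-v, by simpa using h⟩
    · exact ⟨v, h⟩
  have hcont : Continuous fun t : ℝ => ν - t • v := by fun_prop
  have hnhds : ∀ᶠ t in nhds (0 : ℝ), ν - t • v ∈ convexHull ℝ T := by
    refine hcont.continuousAt.preimage_mem_nhds ?_
    simpa using mem_interior_iff_mem_nhds.mp hν
  obtain ⟨t, ht, ht0⟩ := (hnhds.filter_mono nhdsWithin_le_nhds).and self_mem_nhdsWithin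
    |>.exists (f := nhdsWithin 0 (Ioi 0))
  by_contra! hle
  have hmem : f ν ≤ f (ν - t • v) := convexHull_min hle (convex_halfSpace_ge f.isLinear _) ht
  rw [map_sub, map_smul, smul_eq_mul] at hmem
  linarith [mul_pos (show (0 : ℝ) < t from ht0) hv]

variable [NormedAddCommGroup E] [NormedSpace ℝ E] [FiniteDimensional ℝ E]

theorem Convex.exists_ne_zero_forall_le_of_notMem_interior {C : Set E} (hC : Convex ℝ C)
    (hne : C.Nonempty) {ν : E} (hν : ν ∉ interior C) :
    ∃ f : Module.Dual ℝ E, f ≠ 0 ∧ ∀ x ∈ C, f ν ≤ f x := by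
  by_cases hint : (interior C).Nonempty
  · obtain ⟨f, hf⟩ := geometric_hahn_banach_open_point hC.interior isOpen_interior hν
    obtain ⟨x₀, hx₀⟩ := hint
    refine ⟨-f, fun h => (hf x₀ hx₀).ne ?_, fun x hx => ?_⟩
    · have hf0 := neg_eq_zero.mp h
      exact (LinearMap.congr_fun hf0 x₀).trans (LinearMap.congr_fun hf0 ν).symm
    have hcl : closure (interior C) ⊆ {x | f x ≤ f ν} :=
      closure_minimal (fun y hy => (hf y hy).le) (isClosed_le f.continuous continuous_const)
    rw [hC.closure_interior_eq_closure_of_nonempty_interior ⟨x₀, hx₀⟩] at hcl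
    simpa using hcl (subset_closure hx)
  · obtain ⟨x₀, hx₀⟩ := hne
    have hspan : vectorSpan ℝ C < ⊤ := by
      rw [lt_top_iff_ne_top, ne_eq,
        ← AffineSubspace.affineSpan_eq_top_iff_vectorSpan_eq_top_of_nonempty ℝ E E ⟨x₀, hx₀⟩,
        ← hC.interior_nonempty_iff_affineSpan_eq_top]
      exact hint
    obtain ⟨g, hg0, hg⟩ := (vectorSpan ℝ C).exists_le_ker_of_lt_top hspan
    have hconst : ∀ x ∈ C, g x = g x₀ := fun x hx => by
      simpa [sub_eq_zero] using hg (vsub_mem_vectorSpan ℝ hx hx₀)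
    rcases le_total (g ν) (g x₀) with h | h
    · exact ⟨g, hg0, fun x hx => h.trans_eq (hconst x hx).symm⟩
    · exact ⟨-g, neg_ne_zero.mpr hg0, fun x hx => by simp [hconst x hx, h]⟩

theorem mem_interior_convexHull_iff_forall_exists_lt {T : Set E} (hT : T.Nonempty) {ν : E} :
    ν ∈ interior (convexHull ℝ T) ↔ ∀ f : Module.Dual ℝ E, f ≠ 0 → ∃ x ∈ T, f x < f ν := by
  refine ⟨fun hν f hf => exists_lt_of_mem_interior_convexHull hν hf, fun h => ?_⟩
  by_contra hν
  obtain ⟨f, hf0, hf⟩ := (convex_convexHull ℝ T).exists_ne_zero_forall_le_of_notMem_interior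
    (hT.mono (subset_convexHull ℝ T)) hν
  obtain ⟨x, hx, hlt⟩ := h f hf0
  exact (hf x (subset_convexHull ℝ T hx)).not_gt hlt

end SupportingHyperplane

variable {ι κ : Type*} [Fintype ι]

theorem mem_interior_convexHull_iff_forall_exists_dotProduct_lt {T : Set (ι → ℝ)}
    (hT : T.Nonempty) {ν : ι → ℝ} :
    ν ∈ interior (convexHull ℝ T) ↔ ∀ w : ι → ℝ, w ≠ 0 → ∃ x ∈ T, x ⬝ᵥ w < ν ⬝ᵥ w := by
  classical
  rw [mem_interior_convexHull_iff_forall_exists_lt hT,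
    ← (dotProductEquiv ℝ ι).toEquiv.forall_congr_right]
  simp [dotProduct_comm]

@[simp]
theorem ratCast_dotProduct {K : Type*} [DivisionRing K] [CharZero K] (v w : ι → ℚ) :
    (Rat.cast ∘ v : ι → K) ⬝ᵥ (Rat.cast ∘ w) = ((v ⬝ᵥ w : ℚ) : K) :=
  (RingHom.map_dotProduct (Rat.castHom K) v w).symm

theorem mem_closure_image_ratCast_of_dotProduct_eq_zero (s : Finset κ) (a : κ → ι → ℚ)
    {y : ι → ℝ} (hy : ∀ k ∈ s, (Rat.cast ∘ a k) ⬝ᵥ y = 0) :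
    y ∈ closure ((Rat.cast ∘ ·) '' {q : ι → ℚ | ∀ k ∈ s, a k ⬝ᵥ q = 0}) := by
  classical
  induction s using Finset.induction_on with
  | empty =>
    simpa [Function.comp_def] using
      (DenseRange.piMap fun _ : ι => Rat.denseRange_cast (𝕜 := ℝ)).closure_range ▸ mem_univ y
  | insert k s _ ih =>
    set Q := {q : ι → ℚ | ∀ k ∈ s, a k ⬝ᵥ q = 0}
    have hy' : y ∈ closure ((Rat.cast ∘ ·) '' Q) := ih fun j hj => hy j (by simp [hj])
    by_cases hQ : ∀ q ∈ Q, a k ⬝ᵥ q = 0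
    · refine closure_mono (image_mono fun q hq => ?_) hy'
      simpa [Q, hQ q hq] using hq
    push Not at hQ
    obtain ⟨u, hu, hku⟩ := hQ
    -- projection along `u` onto the hyperplane `a k ⬝ᵥ x = 0`; it has rational coefficients
    let π : (ι → ℝ) → ι → ℝ :=
      fun x => x - ((Rat.cast ∘ a k) ⬝ᵥ x / (a k ⬝ᵥ u : ℚ)) • (Rat.cast ∘ u)
    have hπ : Continuous π :=
      continuous_id.sub (((continuous_const.dotProduct continuous_id).div_const _).smul
        continuous_const)
    have hπy : π y = y := by simp [π, hy k (by simp)]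
    rw [← hπy]
    refine map_mem_closure hπ hy' ?_
    rintro _ ⟨q, hq, rfl⟩
    refine ⟨q - (a k ⬝ᵥ q / a k ⬝ᵥ u) • u, ?_, ?_⟩
    · simp only [Finset.mem_insert, mem_ofPred_eq, forall_eq_or_imp, dotProduct_sub,
        dotProduct_smul, smul_eq_mul]
      refine ⟨by field_simp; ring, fun j hj => by simp [hq j hj, hu j hj]⟩
    · ext i
      simp [π]

theorem exists_rat_ne_zero_forall_dotProduct_nonneg (s : Finset κ) (a : κ → ι → ℚ)
    {w : ι → ℝ} (hw0 : w ≠ 0) (hw : ∀ k ∈ s, 0 ≤ (Rat.cast ∘ a k) ⬝ᵥ w) :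
    ∃ q : ι → ℚ, q ≠ 0 ∧ ∀ k ∈ s, 0 ≤ a k ⬝ᵥ q := by
  classical
  set tight := s.filter fun k => (Rat.cast ∘ a k) ⬝ᵥ w = 0
  set U : Set (ι → ℝ) :=
    {x | x ≠ 0} ∩
      ⋂ k ∈ s.filter fun k => 0 < (Rat.cast ∘ a k) ⬝ᵥ w, {x | 0 < (Rat.cast ∘ a k) ⬝ᵥ x}
  have hU : IsOpen U :=
    isOpen_ne.inter (isOpen_biInter_finset fun k _ =>
      isOpen_lt continuous_const (continuous_const.dotProduct continuous_id))
  have hwU : w ∈ U := ⟨hw0, by simp⟩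
  have hw_tight :=
    mem_closure_image_ratCast_of_dotProduct_eq_zero tight a (y := w) (by simp [tight])
  obtain ⟨_, hqU, q, hq, rfl⟩ := mem_closure_iff.mp hw_tight U hU hwU
  refine ⟨q, fun h => hqU.1 (by simp [h]), fun k hk => ?_⟩
  rcases (hw k hk).eq_or_lt with h | h
  · exact (hq k (by simp [tight, hk, h])).ge
  · have : 0 < (Rat.cast ∘ a k : ι → ℝ) ⬝ᵥ (Rat.cast ∘ q) :=
      mem_iInter₂.mp hqU.2 k (by simp [hk, h])
    rw [ratCast_dotProduct] at this
    exact_mod_cast this.le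

theorem exists_nat_smul_eq_intCast (q : ι → ℚ) :
    ∃ d : ℕ, 0 < d ∧ ∃ ξ : ι → ℤ, (d : ℚ) • q = Int.cast ∘ ξ := by
  classical
  refine ⟨∏ i, (q i).den, Finset.prod_pos fun i _ => (q i).pos, ?_⟩
  choose c hc using fun i => Finset.dvd_prod_of_mem (fun j => (q j).den) (Finset.mem_univ i)
  refine ⟨fun i => c i * (q i).num, funext fun i => ?_⟩
  simp [hc i, ← Rat.mul_den_eq_num]
  ring

theorem exists_int_ne_zero_forall_dotProduct_nonneg_iff (s : Finset κ) (a : κ → ι → ℚ) :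
    (∃ ξ : ι → ℤ, ξ ≠ 0 ∧ ∀ k ∈ s, 0 ≤ (Rat.cast ∘ a k : ι → ℝ) ⬝ᵥ (Int.cast ∘ ξ)) ↔
      ∃ w : ι → ℝ, w ≠ 0 ∧ ∀ k ∈ s, 0 ≤ (Rat.cast ∘ a k) ⬝ᵥ w := by
  refine ⟨fun ⟨ξ, hξ0, hξ⟩ => ⟨Int.cast ∘ ξ, fun h => hξ0 ?_, hξ⟩, fun ⟨w, hw0, hw⟩ => ?_⟩
  · exact funext fun i => by simpa using congrFun h i
  obtain ⟨q, hq0, hq⟩ := exists_rat_ne_zero_forall_dotProduct_nonneg s a hw0 hw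
  obtain ⟨d, hd, ξ, hξ⟩ := exists_nat_smul_eq_intCast q
  refine ⟨ξ, fun h => hq0 (by simpa [h, hd.ne'] using hξ), fun k hk => ?_⟩
  have hξℝ : (Int.cast ∘ ξ : ι → ℝ) = Rat.cast ∘ ((d : ℚ) • q) := by
    rw [hξ]; exact funext fun i => (Rat.cast_intCast (ξ i)).symm
  rw [hξℝ, ratCast_dotProduct, dotProduct_smul, smul_eq_mul]
  exact_mod_cast mul_nonneg d.cast_nonneg (hq k hk)

/-- **Lattice form of the Hilbert–Mumford criterion for stability under a torus action.**
Let `S` be a finite nonempty set of rational vectors in `ℚ^n` and `ν ∈ ℚ^n`.  Then `ν` lies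
in the interior of the convex hull of `S` in `ℝ^n` iff for every nonzero integral `ξ ∈ ℤ^n`
there is `χ ∈ S` with `⟨χ − ν, ξ⟩ < 0` for the standard inner product. -/
theorem statement11 (n : ℕ) (S : Finset (Fin n → ℚ)) (hS : S.Nonempty) (ν : Fin n → ℚ) :
    ((fun j => (ν j : ℝ)) ∈
      interior (convexHull ℝ {x : Fin n → ℝ | ∃ χ ∈ S, x = fun j => (χ j : ℝ)})) ↔
    ∀ ξ : Fin n → ℤ, ξ ≠ 0 → ∃ χ ∈ S, (∑ j, ((χ j : ℝ) - (ν j : ℝ)) * (ξ j : ℝ)) < 0 := by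
  have hT : {x : Fin n → ℝ | ∃ χ ∈ S, x = fun j => (χ j : ℝ)}.Nonempty :=
    let ⟨χ, hχ⟩ := hS; ⟨_, χ, hχ, rfl⟩
  have hsub (χ : Fin n → ℚ) (w : Fin n → ℝ) :
      (Rat.cast ∘ (χ - ν)) ⬝ᵥ w = (Rat.cast ∘ χ) ⬝ᵥ w - (Rat.cast ∘ ν) ⬝ᵥ w := by
    simp [dotProduct, sub_mul]
  have hsum (χ : Fin n → ℚ) (w : Fin n → ℝ) :
      ∑ j, ((χ j : ℝ) - (ν j : ℝ)) * w j = (Rat.cast ∘ χ) ⬝ᵥ w - (Rat.cast ∘ ν) ⬝ᵥ w := by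
    simp [dotProduct, sub_mul]
  rw [mem_interior_convexHull_iff_forall_exists_dotProduct_lt hT, ← not_iff_not]
  push Not
  have hcone := exists_int_ne_zero_forall_dotProduct_nonneg_iff S (· - ν)
  simp only [hsub, sub_nonneg] at hcone
  simp only [hsum, sub_nonneg, Set.mem_ofPred_eq, forall_exists_index, and_imp,
    @forall_comm (Fin n → ℝ), forall_eq]
  exact hcone.symm
end
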